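/- Let m ≥ 2, let π_0, ..., π_m ≥ 0 with Σ_j π_j ≤ 1 and q_0, ..., q_m ∈ [0,1], and define SCDL_m = max over i of Σ_{j≤i} π_j·max(q_j - (i+1)/m, 0) + Σ_{j>i} π_j·max(i/m - q_j, 0). Then for every index i and every α > 0, Σ_{j<i} 1[q_j > i/m - α/√π_j]·√π_j ≤ 3 + C·(log m)·(α·m + √(m·SCDL_m)) for an absolute constant C. -/

import Mathlib

open scoped Classical

/-- Soft-binned calibration fixed decision loss at index `i`, built from bin
weights `π` and bin conditional means `q`. -/
noncomputable def gSCFDL (m : ℕ) (π q : ℕ → ℝ) (i : ℕ) : ℝ :=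
  ∑ j ∈ Finset.range (i + 1), π j * max (q j - ((i : ℝ) + 1) / m) 0
    + ∑ j ∈ Finset.Icc (i + 1) m, π j * max ((i : ℝ) / m - q j) 0

/-- `SCDL_m = max_{i=0,...,m} SCFDL_{m,i}`. -/
noncomputable def gSCDLm (m : ℕ) (π q : ℕ → ℝ) : ℝ :=
  Finset.sup' (Finset.range (m + 1)) (Finset.nonempty_range_iff.mpr (Nat.succ_ne_zero m))
    (gSCFDL m π q)

/-!
Group the violating bins `j < i - 1` by the dyadic shell `2^{-(k+1)} < √π_j ≤ 2^{-k}` of their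
weight. The bin `j = i - 1` contributes at most `1`, and so do all the bins with
`√π_j ≤ 2^{-(⌊log₂ m⌋ + 1)} < 1/m` together. In shell `k` put `ℓ = 2^{-(k+1)}`,
`B = √(m·SCDL_m)` and `n = ⌊(αm + B)/ℓ⌋`; every violating bin of the shell has
`q_j > i/m - α/ℓ`. At most `n` of them lie within distance `n + 1` of `i`, and each of the others
overshoots the threshold of the index `i - n - 2` by more than `B/(mℓ)`, so its term in
`SCFDL_{i-n-2} ≤ SCDL_m` exceeds `ℓB/m`: there are fewer than `B/ℓ` of them. Hence each of the
`⌊log₂ m⌋ + 1` shells contributes `O(αm + B)`.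
-/

open Finset

theorem Finset.sum_le_sum_sum_filter_of_forall_exists {ι κ M : Type*} [AddCommMonoid M]
    [PartialOrder M] [IsOrderedAddMonoid M] {s : Finset ι} {t : Finset κ} {f : ι → M}
    {P : κ → ι → Prop} [∀ k, DecidablePred (P k)] (hf : ∀ j ∈ s, 0 ≤ f j)
    (hP : ∀ j ∈ s, ∃ k ∈ t, P k j) :
    ∑ j ∈ s, f j ≤ ∑ k ∈ t, ∑ j ∈ s with P k j, f j := by
  calc ∑ j ∈ s, f j ≤ ∑ j ∈ s, ∑ k ∈ t, if P k j then f j else 0 := by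
        refine sum_le_sum fun j hj => ?_
        obtain ⟨k, hk, hPk⟩ := hP j hj
        calc f j = if P k j then f j else 0 := (if_pos hPk).symm
          _ ≤ ∑ k ∈ t, if P k j then f j else 0 :=
            single_le_sum (f := fun k => if P k j then f j else 0)
              (fun k _ => by split_ifs <;> simp [hf j hj]) hk
    _ = ∑ k ∈ t, ∑ j ∈ s with P k j, f j := by
        rw [sum_comm]; simp_rw [sum_filter]

theorem Finset.sum_range_le_sum_range_pred_add_one {f : ℕ → ℝ} {i : ℕ} (hf : f (i - 1) ≤ 1) :
    ∑ j ∈ range i, f j ≤ ∑ j ∈ range (i - 1), f j + 1 := by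
  cases i with
  | zero => simp
  | succ i => simpa [sum_range_succ] using hf

theorem Finset.sum_le_mul_of_window {f : ℕ → ℝ} {W : Finset ℕ} {i n : ℕ} {s : ℝ} (hs : 0 ≤ s)
    (hW : ∀ j ∈ W, j + 2 ≤ i ∧ i ≤ j + n + 1 ∧ f j ≤ s) : ∑ j ∈ W, f j ≤ n * s := by
  have hcard : #W ≤ n := by
    have hsub : W ⊆ Ico (i - (n + 1)) (i - 1) := fun j hj => by
      have := hW j hj
      rw [mem_Ico]; omega
    have := card_le_card hsub
    rw [Nat.card_Ico] at this
    omega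
  calc ∑ j ∈ W, f j ≤ #W * s := by simpa using sum_le_card_nsmul W f s fun j hj => (hW j hj).2.2
    _ ≤ n * s := by gcongr

theorem exists_lt_pow_succ_le_pow {R : Type*} [Field R] [LinearOrder R] [IsStrictOrderedRing R]
    [Archimedean R] {ρ x : R} {K : ℕ} (hρ0 : 0 < ρ) (hρ1 : ρ < 1) (hx : ρ ^ (K + 1) < x)
    (hx1 : x ≤ 1) : ∃ k < K + 1, ρ ^ (k + 1) < x ∧ x ≤ ρ ^ k := by
  obtain ⟨k, hk⟩ := exists_nat_pow_near_of_lt_one ((pow_pos hρ0 _).trans hx) hx1 hρ0 hρ1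
  exact ⟨k, (pow_lt_pow_iff_right_of_lt_one₀ hρ0 hρ1).1 (hx.trans_le hk.2), hk⟩

theorem Finset.sum_le_one_of_le_half_pow_log {ι : Type*} {W : Finset ι} {f : ι → ℝ} {n : ℕ}
    (hW : #W ≤ n) (hf : ∀ j ∈ W, f j ≤ (1 / 2) ^ (Nat.log 2 n + 1)) : ∑ j ∈ W, f j ≤ 1 := by
  have hn : (n : ℝ) < 2 ^ (Nat.log 2 n + 1) := by
    exact_mod_cast Nat.lt_pow_succ_log_self one_lt_two n
  calc ∑ j ∈ W, f j ≤ #W * (1 / 2 : ℝ) ^ (Nat.log 2 n + 1) := by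
        simpa using sum_le_card_nsmul W f _ hf
    _ ≤ n * (1 / 2 : ℝ) ^ (Nat.log 2 n + 1) := by gcongr
    _ ≤ 1 := by
        rw [one_div, inv_pow, ← div_eq_mul_inv, div_le_one (by positivity)]
        exact hn.le

theorem natLog_mul_log_two_le_log (n : ℕ) : (Nat.log 2 n : ℝ) * Real.log 2 ≤ Real.log n := by
  have h := Real.natLog_le_logb n 2
  rwa [Nat.cast_ofNat, Real.logb, le_div_iff₀ (Real.log_pos one_lt_two)] at h

section SoftBinned

variable {m : ℕ} {π q : ℕ → ℝ}

theorem gSCFDL_le_gSCDLm {i : ℕ} (hi : i ≤ m) : gSCFDL m π q i ≤ gSCDLm m π q :=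
  le_sup' (gSCFDL m π q) (mem_range.2 (Nat.lt_succ_of_le hi))

theorem sum_overshoot_le_gSCDLm (hπ : ∀ j, 0 ≤ π j) {i : ℕ} (hi : i ≤ m) {F : Finset ℕ}
    (hF : F ⊆ range (i + 1)) :
    ∑ j ∈ F, π j * max (q j - ((i : ℝ) + 1) / m) 0 ≤ gSCDLm m π q := by
  have hterm : ∀ j, 0 ≤ π j * max (q j - ((i : ℝ) + 1) / m) 0 :=
    fun j => mul_nonneg (hπ j) (le_max_right _ _)
  calc ∑ j ∈ F, π j * max (q j - ((i : ℝ) + 1) / m) 0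
      ≤ ∑ j ∈ range (i + 1), π j * max (q j - ((i : ℝ) + 1) / m) 0 :=
        sum_le_sum_of_subset_of_nonneg hF fun j _ _ => hterm j
    _ ≤ gSCFDL m π q i :=
        le_add_of_nonneg_right (sum_nonneg fun j _ => mul_nonneg (hπ j) (le_max_right _ _))
    _ ≤ gSCDLm m π q := gSCFDL_le_gSCDLm hi

theorem gSCDLm_nonneg (hπ : ∀ j, 0 ≤ π j) : 0 ≤ gSCDLm m π q := by
  simpa using sum_overshoot_le_gSCDLm (q := q) hπ (Nat.zero_le m) (empty_subset _)

theorem card_mul_lt_sqrt_of_overshoot (hm : 0 < m) (hπ : ∀ j, 0 ≤ π j) {i : ℕ} (hi : i ≤ m)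
    {ℓ : ℝ} (hℓ : 0 < ℓ) {F : Finset ℕ} (hne : F.Nonempty)
    (hF : ∀ j ∈ F, j ≤ i ∧ ℓ < √(π j) ∧
      √(m * gSCDLm m π q) / (m * ℓ) < q j - ((i : ℝ) + 1) / m) :
    #F * ℓ < √(m * gSCDLm m π q) := by
  set B := √(m * gSCDLm m π q)
  have hm' : (0 : ℝ) < m := by exact_mod_cast hm
  have hB2 : B * B = m * gSCDLm m π q :=
    Real.mul_self_sqrt (mul_nonneg hm'.le (gSCDLm_nonneg hπ))
  have hterm : ∀ j ∈ F, ℓ * B / m < π j * max (q j - ((i : ℝ) + 1) / m) 0 := by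
    intro j hj
    obtain ⟨-, hℓj, hgap⟩ := hF j hj
    calc ℓ * B / m = ℓ ^ 2 * (B / (m * ℓ)) := by field_simp
      _ < π j * max (q j - ((i : ℝ) + 1) / m) 0 :=
        mul_lt_mul'' ((Real.lt_sqrt hℓ.le).1 hℓj) (hgap.trans_le (le_max_left _ _))
          (by positivity) (by positivity)
  have hsum : #F * (ℓ * B / m) < gSCDLm m π q :=
    calc #F * (ℓ * B / m) = ∑ j ∈ F, ℓ * B / m := by simp
      _ < ∑ j ∈ F, π j * max (q j - ((i : ℝ) + 1) / m) 0 := sum_lt_sum_of_nonempty hne hterm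
      _ ≤ gSCDLm m π q :=
        sum_overshoot_le_gSCDLm hπ hi fun j hj => mem_range.2 (Nat.lt_succ_of_le (hF j hj).1)
  have h : #F * ℓ * B < B * B := by
    rw [hB2]
    calc #F * ℓ * B = #F * (ℓ * B / m) * m := by field_simp
      _ < gSCDLm m π q * m := by gcongr
      _ = m * gSCDLm m π q := mul_comm _ _
  exact lt_of_mul_lt_mul_right h (Real.sqrt_nonneg _)

theorem sum_sqrt_le_of_shell (hm : 0 < m) (hπ : ∀ j, 0 ≤ π j) {i : ℕ} (hi : i ≤ m) {α ℓ s : ℝ}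
    (hα : 0 ≤ α) (hℓ : 0 < ℓ) (hs : 0 ≤ s) {W : Finset ℕ}
    (hW : ∀ j ∈ W, j + 2 ≤ i ∧ (i : ℝ) / m - α / ℓ < q j ∧ ℓ < √(π j) ∧ √(π j) ≤ s) :
    ∑ j ∈ W, √(π j) ≤ s / ℓ * (α * m + 2 * √(m * gSCDLm m π q)) := by
  set B := √(m * gSCDLm m π q)
  have hm' : (0 : ℝ) < m := by exact_mod_cast hm
  -- At most `n` bins lie within distance `n + 1` of `i`; the others overshoot the threshold of
  -- the index `i - (n + 2)` by more than `B / (m ℓ)`.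
  set n := ⌊(α * m + B) / ℓ⌋₊
  have hn : (α * m + B) / ℓ < n + 1 := Nat.lt_floor_add_one _
  rw [← sum_filter_add_sum_filter_not W (fun j => i ≤ j + n + 1)]
  have hnear : ∑ j ∈ W with i ≤ j + n + 1, √(π j) ≤ s / ℓ * (α * m + B) :=
    calc ∑ j ∈ W with i ≤ j + n + 1, √(π j) ≤ n * s :=
          sum_le_mul_of_window hs fun j hj => by
            obtain ⟨hjW, hnear⟩ := mem_filter.1 hj
            exact ⟨(hW j hjW).1, hnear, (hW j hjW).2.2.2⟩
      _ ≤ (α * m + B) / ℓ * s := by gcongr; exact Nat.floor_le (by positivity)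
      _ = s / ℓ * (α * m + B) := by ring
  have hfar : ∑ j ∈ W with ¬i ≤ j + n + 1, √(π j) ≤ s / ℓ * B := by
    set F := W.filter fun j => ¬i ≤ j + n + 1
    rcases F.eq_empty_or_nonempty with hF | hF
    · rw [hF, sum_empty]; positivity
    obtain ⟨j₀, hj₀⟩ := hF
    have hni : n + 2 ≤ i := by have := (mem_filter.1 hj₀).2; omega
    have hcard : #F * ℓ < B := by
      refine card_mul_lt_sqrt_of_overshoot hm hπ (i := i - (n + 2)) (by omega) hℓ ⟨j₀, hj₀⟩
        fun j hj => ?_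
      obtain ⟨hjW, hfar⟩ := mem_filter.1 hj
      obtain ⟨-, hviol, hℓj, -⟩ := hW j hjW
      refine ⟨by omega, hℓj, ?_⟩
      have hthr : ((i - (n + 2) : ℕ) + 1 : ℝ) / m = i / m - (n + 1) / m := by
        rw [Nat.cast_sub hni]; push_cast; ring
      have hgap : B / (m * ℓ) = (α * m + B) / ℓ / m - α / ℓ := by field_simp; ring
      have := div_lt_div_of_pos_right hn hm'
      linarith
    calc ∑ j ∈ F, √(π j) ≤ #F * s := by
          simpa using sum_le_card_nsmul F _ s fun j hj => (hW j (mem_filter.1 hj).1).2.2.2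
      _ = #F * ℓ * (s / ℓ) := by field_simp
      _ ≤ B * (s / ℓ) := by gcongr
      _ = s / ℓ * B := mul_comm _ _
  linarith

theorem sum_sqrt_violating_le (hm : 0 < m) (hπ : ∀ j, 0 ≤ π j) (hπ1 : ∀ j ≤ m, π j ≤ 1)
    {i : ℕ} (hi : i ≤ m) {α : ℝ} (hα : 0 ≤ α) :
    ∑ j ∈ range (i - 1) with (i : ℝ) / m - α / √(π j) < q j, √(π j)
      ≤ 1 + (Nat.log 2 m + 1) * (2 * (α * m + 2 * √(m * gSCDLm m π q))) := by
  set L := Nat.log 2 m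
  set V := (range (i - 1)).filter fun j => (i : ℝ) / m - α / √(π j) < q j
  have hV : ∀ j ∈ V, j + 2 ≤ i ∧ (i : ℝ) / m - α / √(π j) < q j := fun j hj => by
    obtain ⟨hj, hviol⟩ := mem_filter.1 hj
    exact ⟨by rw [mem_range] at hj; omega, hviol⟩
  rw [← sum_filter_add_sum_filter_not V (fun j => √(π j) ≤ (1 / 2 : ℝ) ^ (L + 1))]
  have hsmall : ∑ j ∈ V with √(π j) ≤ (1 / 2) ^ (L + 1), √(π j) ≤ 1 := by
    refine sum_le_one_of_le_half_pow_log ?_ fun j hj => (mem_filter.1 hj).2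
    calc #(V.filter fun j => √(π j) ≤ (1 / 2) ^ (L + 1)) ≤ #(range (i - 1)) :=
          card_le_card ((filter_subset _ _).trans (filter_subset _ _))
      _ ≤ m := by rw [card_range]; omega
  have hshells : ∑ j ∈ V with ¬√(π j) ≤ (1 / 2) ^ (L + 1), √(π j)
      ≤ (L + 1) * (2 * (α * m + 2 * √(m * gSCDLm m π q))) :=
    calc ∑ j ∈ V with ¬√(π j) ≤ (1 / 2) ^ (L + 1), √(π j)
        ≤ ∑ k ∈ range (L + 1), ∑ j ∈ V.filter (fun j => ¬√(π j) ≤ (1 / 2) ^ (L + 1)) with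
            (1 / 2 : ℝ) ^ (k + 1) < √(π j) ∧ √(π j) ≤ (1 / 2) ^ k, √(π j) := by
          refine sum_le_sum_sum_filter_of_forall_exists
            (P := fun k j => (1 / 2 : ℝ) ^ (k + 1) < √(π j) ∧ √(π j) ≤ (1 / 2) ^ k)
            (fun _ _ => Real.sqrt_nonneg _) fun j hj => ?_
          obtain ⟨hjV, hbig⟩ := mem_filter.1 hj
          have hjm : j ≤ m := by have := (hV j hjV).1; omega
          obtain ⟨k, hk, hshell⟩ :=
            exists_lt_pow_succ_le_pow (ρ := (1 / 2 : ℝ)) (by norm_num) (by norm_num)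
            (not_le.1 hbig) (Real.sqrt_le_one.2 (hπ1 j hjm))
          exact ⟨k, mem_range.2 hk, hshell⟩
      _ ≤ ∑ k ∈ range (L + 1), 2 * (α * m + 2 * √(m * gSCDLm m π q)) := by
          refine sum_le_sum fun k _ => ?_
          have hratio : (1 / 2 : ℝ) ^ k / (1 / 2) ^ (k + 1) = 2 := by
            rw [pow_succ]; field_simp
          refine (sum_sqrt_le_of_shell (q := q) (ℓ := (1 / 2) ^ (k + 1)) (s := (1 / 2) ^ k)
            hm hπ hi hα (by positivity) (by positivity) fun j hj => ?_).trans_eq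
            (by rw [hratio])
          obtain ⟨hj, hℓj, hsj⟩ := mem_filter.1 hj
          obtain ⟨hji, hviol⟩ := hV j (mem_filter.1 hj).1
          refine ⟨hji, ?_, hℓj, hsj⟩
          have := div_le_div_of_nonneg_left hα (by positivity) hℓj.le
          linarith
      _ = (L + 1) * (2 * (α * m + 2 * √(m * gSCDLm m π q))) := by simp
  linarith

end SoftBinned

/-- for bin weights `π_j ≥ 0` with `Σ π_j ≤ 1` and bin means
`q_j ∈ [0,1]`, for every index `i ≤ m` and every `α > 0`,
`Σ_{j<i} 1[q_j > i/m - α/√π_j]·√π_j ≤ 3 + C·(log m)·(α·m + √(m·SCDL_m))`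
for an absolute constant `C`. -/
theorem violating_bins_bound :
    ∃ C : ℝ, 0 < C ∧
      ∀ (m : ℕ) (π q : ℕ → ℝ), 2 ≤ m →
        (∀ j, 0 ≤ π j) → (∑ j ∈ Finset.range (m + 1), π j ≤ 1) →
        (∀ j ≤ m, q j ∈ Set.Icc (0:ℝ) 1) →
        ∀ i ≤ m, ∀ α : ℝ, 0 < α →
          (∑ j ∈ Finset.range i,
              if (i : ℝ) / m - α / Real.sqrt (π j) < q j then Real.sqrt (π j) else 0)
            ≤ 3 + C * Real.log m * (α * m + Real.sqrt (m * gSCDLm m π q)) := by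
  refine ⟨12, by norm_num, fun m π q hm hπ hπsum _ i hi α hα => ?_⟩
  have hπ1 : ∀ j ≤ m, π j ≤ 1 := fun j hj =>
    (single_le_sum (fun k _ => hπ k) (mem_range.2 (Nat.lt_succ_of_le hj))).trans hπsum
  have hviol := sum_sqrt_violating_le (q := q) (by omega) hπ hπ1 hi hα.le
  set L := Nat.log 2 m
  set A := α * m
  set B := √(m * gSCDLm m π q)
  have hA : 0 ≤ A := by positivity
  have hB : 0 ≤ B := Real.sqrt_nonneg _
  have hlog : 4 * ((L : ℝ) + 1) ≤ 12 * Real.log m := by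
    have hL : (1 : ℝ) ≤ L := by exact_mod_cast Nat.le_log_of_pow_le one_lt_two (by simpa using hm)
    nlinarith [natLog_mul_log_two_le_log m, Real.log_two_gt_d9]
  calc _ ≤ ∑ j ∈ range (i - 1),
          (if (i : ℝ) / m - α / √(π j) < q j then √(π j) else 0) + 1 := by
        refine sum_range_le_sum_range_pred_add_one ?_
        split_ifs
        · exact Real.sqrt_le_one.2 (hπ1 _ (by omega))
        · exact zero_le_one
    _ ≤ 2 + (L + 1) * (2 * (A + 2 * B)) := by rw [← sum_filter]; linarith
    _ ≤ 2 + 4 * (L + 1) * (A + B) := by nlinarith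
    _ ≤ 3 + 12 * Real.log m * (A + B) := by nlinarith
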